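/- Suppose every OWA vector λ^v is non-increasing with all entries in [0, 1]. Let S ⊆ C, let x ∈ S, and let p ∈ C \ S satisfy sco({p}) ≥ sco({x}). Then sco(S) − sco((S \ {x}) ∪ {p}) ≤ |N(p) ∩ N(S \ {x})|. -/

import Mathlib

open Finset

/-- The score of a committee `S`: each voter `v` (with approval set `A v` and
OWA vector `lam v`) contributes `∑_{j=1}^{|A v ∩ S|} lam v j`. -/
def sco {C V : Type*} [Fintype V] [DecidableEq C]
    (A : V → Finset C) (lam : V → ℕ → ℚ) (S : Finset C) : ℚ :=
  ∑ v : V, ∑ j ∈ Finset.Icc 1 ((A v ∩ S).card), lam v j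

/-- `Nc A c` is the set of voters approving candidate `c`. -/
def Nc {C V : Type*} [Fintype V] [DecidableEq C] (A : V → Finset C) (c : C) : Finset V :=
  Finset.univ.filter fun v => c ∈ A v

/-- `Ns A S` is the set of voters approving at least one member of `S`. -/
def Ns {C V : Type*} [Fintype V] [DecidableEq C] (A : V → Finset C) (S : Finset C) : Finset V :=
  Finset.univ.filter fun v => (A v ∩ S).Nonempty

lemma lam_first {V : Type*} (lam : V → ℕ → ℚ)
    (hmono : ∀ (v : V) (j : ℕ), 1 ≤ j → lam v (j + 1) ≤ lam v j)
    (v : V) (k : ℕ) : lam v (k + 1) ≤ lam v 1 := by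
  induction k with
  | zero => exact le_refl _
  | succ n ih => exact le_trans (hmono v (n + 1) (by omega)) ih

lemma card_inter_insert {C : Type*} [DecidableEq C] (Av T : Finset C) (c : C) (hc : c ∉ T) :
    (Av ∩ insert c T).card = (Av ∩ T).card + (if c ∈ Av then 1 else 0) := by
  by_cases h : c ∈ Av
  · rw [if_pos h, Finset.inter_insert_of_mem h,
      Finset.card_insert_of_notMem (by simp [hc])]
  · rw [if_neg h, Finset.inter_insert_of_notMem h, add_zero]

lemma sco_singleton {C V : Type*} [Fintype V] [DecidableEq C]
    (A : V → Finset C) (lam : V → ℕ → ℚ) (c : C) :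
    sco A lam {c} = ∑ v : V, (if c ∈ A v then lam v 1 else 0) := by
  unfold sco
  refine Finset.sum_congr rfl fun v _ => ?_
  by_cases h : c ∈ A v
  · have : A v ∩ {c} = {c} := by
      rw [Finset.inter_comm]; exact Finset.singleton_inter_of_mem h
    simp [this, h]
  · have : A v ∩ {c} = ∅ := by
      rw [Finset.inter_comm]; exact Finset.singleton_inter_of_notMem h
    simp [this, h]

/-- If all OWA vectors are non-increasing with entries in `[0,1]`, `x ∈ S`, `p ∉ S` and
`sco {p} ≥ sco {x}`, then swapping `x` for `p` loses at most `|N(p) ∩ N(S \ {x})|` score. -/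
theorem stmt_4 {C V : Type*} [Fintype V] [DecidableEq C] [DecidableEq V]
    (A : V → Finset C) (lam : V → ℕ → ℚ)
    (hrange : ∀ (v : V) (j : ℕ), 1 ≤ j → 0 ≤ lam v j ∧ lam v j ≤ 1)
    (hmono : ∀ (v : V) (j : ℕ), 1 ≤ j → lam v (j + 1) ≤ lam v j)
    (S : Finset C) (x : C) (hx : x ∈ S) (p : C) (hp : p ∉ S)
    (hscore : sco A lam {x} ≤ sco A lam {p}) :
    sco A lam S - sco A lam (insert p (S.erase x)) ≤
      ((Nc A p ∩ Ns A (S.erase x)).card : ℚ) := by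
  set T := S.erase x with hT
  have hpT : p ∉ T := fun h => hp (Finset.mem_of_mem_erase h)
  have hxT : x ∉ T := Finset.notMem_erase x S
  have hS : S = insert x T := (Finset.insert_erase hx).symm
  have key : ∀ v : V,
      (∑ j ∈ Finset.Icc 1 ((A v ∩ S).card), lam v j)
        - (∑ j ∈ Finset.Icc 1 ((A v ∩ insert p T).card), lam v j)
      ≤ (if x ∈ A v then lam v 1 else 0) - (if p ∈ A v then lam v 1 else 0)
        + (if p ∈ A v ∧ (A v ∩ T).Nonempty then 1 else 0) := by
    intro v
    have hcS : (A v ∩ S).card = (A v ∩ T).card + (if x ∈ A v then 1 else 0) := by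
      rw [hS]; exact card_inter_insert _ _ _ hxT
    have hcP : (A v ∩ insert p T).card = (A v ∩ T).card + (if p ∈ A v then 1 else 0) :=
      card_inter_insert _ _ _ hpT
    rw [hcS, hcP]
    set k := (A v ∩ T).card with hk
    have hsum : ∑ j ∈ Finset.Icc 1 (k + 1), lam v j
        = (∑ j ∈ Finset.Icc 1 k, lam v j) + lam v (k + 1) :=
      Finset.sum_Icc_succ_top (by omega) _
    by_cases hxv : x ∈ A v <;> by_cases hpv : p ∈ A v
    · simp only [hxv, hpv, if_pos, true_and]
      have : (0:ℚ) ≤ if (A v ∩ T).Nonempty then (1:ℚ) else 0 := by positivity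
      linarith
    · simp only [hxv, hpv, if_pos, if_neg, false_and, if_false, not_false_iff]
      simp only [add_zero]
      rw [hsum]
      have := lam_first lam hmono v k
      linarith
    · simp only [hxv, hpv, if_pos, if_neg, true_and, not_false_iff]
      simp only [add_zero]
      rw [hsum]
      by_cases hne : (A v ∩ T).Nonempty
      · rw [if_pos hne]
        have h1 := (hrange v 1 le_rfl).2
        have h2 := (hrange v (k + 1) (by omega)).1
        linarith
      · rw [if_neg hne]
        have hk0 : k = 0 := by
          rw [hk, Finset.card_eq_zero, ← Finset.not_nonempty_iff_eq_empty]; exact hne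
        rw [hk0]
        simp
    · simp [hxv, hpv]
  have hcard : ((Nc A p ∩ Ns A T).card : ℚ)
      = ∑ v : V, (if p ∈ A v ∧ (A v ∩ T).Nonempty then (1:ℚ) else 0) := by
    rw [Finset.sum_boole]
    congr 1
    unfold Nc Ns
    rw [← Finset.filter_and]
  calc sco A lam S - sco A lam (insert p T)
      = ∑ v : V, ((∑ j ∈ Finset.Icc 1 ((A v ∩ S).card), lam v j)
          - (∑ j ∈ Finset.Icc 1 ((A v ∩ insert p T).card), lam v j)) := by
        rw [sco, sco, ← Finset.sum_sub_distrib]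
    _ ≤ ∑ v : V, ((if x ∈ A v then lam v 1 else 0) - (if p ∈ A v then lam v 1 else 0)
          + (if p ∈ A v ∧ (A v ∩ T).Nonempty then 1 else 0)) :=
        Finset.sum_le_sum fun v _ => key v
    _ = sco A lam {x} - sco A lam {p} + ((Nc A p ∩ Ns A T).card : ℚ) := by
        rw [Finset.sum_add_distrib, Finset.sum_sub_distrib,
          ← sco_singleton, ← sco_singleton, hcard]
    _ ≤ ((Nc A p ∩ Ns A T).card : ℚ) := by linarith
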